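/- Tsybakov-noise corollary of Proposition 3.1: Let F be a convex set of measurable functions from X to [0,1], let f ∈ F, and let f* ∈ F satisfy Rsq(f*) ≤ Rsq(g) for all g ∈ F. Assume (i) for ν-almost every x, h_{f*}(x) = h_η(x); (ii) for ν-almost every x, |f*(x) − 1/2| ≥ |η(x) − 1/2| (the condition of the paper with ψ(a) = a); and (iii) there exist c ≥ 0, β ≥ 0 such that ν{x : |η(x) − 1/2| ≤ t} ≤ c·t^β for all t ∈ (0, 1/2] (the Tsybakov noise condition). Write E = Rsq(f) − Rsq(f*). Then: (a) for every γ ∈ (0, 1/2], R01(h_f) − R01(h_η) ≤ 2·(E/γ + c·γ^{β+1}); and (b) if 0 < E ≤ 2^{−(β+2)}, then R01(h_f) − R01(h_η) ≤ 2·(1 + c)·E^{(β+1)/(β+2)}. -/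

import Mathlib

open MeasureTheory Set

/-- Classification risk of the classifier induced by `f` (predict 1 iff `f x > 1/2`),
when the conditional probability of label 1 is `η`. -/
noncomputable def R01 {X : Type*} [MeasurableSpace X] (ν : Measure X) (η : X → ℝ)
    (f : X → ℝ) : ℝ :=
  ∫ x, (if f x > 1/2 then 1 - η x else η x) ∂ν

/-- Squared-loss risk of `f` when the conditional probability of label 1 is `η`. -/
noncomputable def Rsq {X : Type*} [MeasurableSpace X] (ν : Measure X) (η : X → ℝ)
    (f : X → ℝ) : ℝ :=
  ∫ x, (η x * (f x - 1)^2 + (1 - η x) * (f x)^2) ∂ν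

lemma integrable_of_bdd {X : Type*} [MeasurableSpace X] {ν : Measure X} [IsFiniteMeasure ν]
    {g : X → ℝ} (hg : Measurable g) (C : ℝ) (h : ∀ x, |g x| ≤ C) : Integrable g ν :=
  (integrable_const C).mono' hg.aestronglyMeasurable (Filter.Eventually.of_forall h)

set_option maxHeartbeats 1000000 in
/-- Tsybakov-noise corollary of Proposition 3.1. -/
theorem tsybakov_corollary
    {X : Type*} [MeasurableSpace X] (ν : Measure X) [IsProbabilityMeasure ν]
    (η : X → ℝ) (hη : Measurable η) (hη01 : ∀ x, η x ∈ Icc (0:ℝ) 1)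
    (F : Set (X → ℝ))
    (hFmeas : ∀ g ∈ F, Measurable g ∧ ∀ x, g x ∈ Icc (0:ℝ) 1)
    (hFconv : ∀ g₁ ∈ F, ∀ g₂ ∈ F, ∀ t ∈ Icc (0:ℝ) 1,
      (fun x => t * g₁ x + (1 - t) * g₂ x) ∈ F)
    (f fstar : X → ℝ) (hf : f ∈ F) (hfstar : fstar ∈ F)
    (hmin : ∀ g ∈ F, Rsq ν η fstar ≤ Rsq ν η g)
    -- (i) the induced classifiers of `fstar` and of `η` agree a.e.
    (hsamesign : ∀ᵐ x ∂ν, (fstar x > 1/2 ↔ η x > 1/2))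
    -- (ii) the condition of the paper with ψ(a) = a
    (hψlb : ∀ᵐ x ∂ν, |η x - 1/2| ≤ |fstar x - 1/2|)
    -- (iii) Tsybakov noise condition
    (c β : ℝ) (hc : 0 ≤ c) (hβ : 0 ≤ β)
    (htsy : ∀ t ∈ Ioc (0:ℝ) (1/2), (ν {x | |η x - 1/2| ≤ t}).toReal ≤ c * t ^ β)
    (E : ℝ) (hE : E = Rsq ν η f - Rsq ν η fstar) :
    (∀ γ ∈ Ioc (0:ℝ) (1/2),
        R01 ν η f - R01 ν η η ≤ 2 * (E / γ + c * γ ^ (β + 1)))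
    ∧ (0 < E → E ≤ 2 ^ (-(β + 2)) →
        R01 ν η f - R01 ν η η ≤ 2 * (1 + c) * E ^ ((β + 1) / (β + 2))) := by
  classical
  obtain ⟨hfm, hf01⟩ := hFmeas f hf
  obtain ⟨hsm, hs01⟩ := hFmeas fstar hfstar
  set I1 : ℝ := ∫ x, (fstar x - η x) * (f x - fstar x) ∂ν with hI1def
  set I2 : ℝ := ∫ x, (f x - fstar x)^2 ∂ν with hI2def
  have hI1int : Integrable (fun x => (fstar x - η x) * (f x - fstar x)) ν := by
    apply integrable_of_bdd ((hsm.sub hη).mul (hfm.sub hsm)) 1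
    intro x
    simp only [Pi.mul_apply, Pi.sub_apply, Pi.add_apply, Pi.pow_apply]
    rcases hη01 x with ⟨h1, h2⟩; rcases hf01 x with ⟨h3, h4⟩; rcases hs01 x with ⟨h5, h6⟩
    rw [abs_mul]
    have e1 : |fstar x - η x| ≤ 1 := abs_le.2 ⟨by linarith, by linarith⟩
    have e2 : |f x - fstar x| ≤ 1 := abs_le.2 ⟨by linarith, by linarith⟩
    nlinarith [abs_nonneg (fstar x - η x), abs_nonneg (f x - fstar x)]
  have hI2int : Integrable (fun x => (f x - fstar x)^2) ν := by
    apply integrable_of_bdd ((hfm.sub hsm).pow measurable_const) 1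
    intro x
    simp only [Pi.mul_apply, Pi.sub_apply, Pi.add_apply, Pi.pow_apply]
    rcases hf01 x with ⟨h3, h4⟩; rcases hs01 x with ⟨h5, h6⟩
    rw [abs_of_nonneg (sq_nonneg _)]
    nlinarith
  have hRt : ∀ t : ℝ, Rsq ν η (fun x => t * f x + (1 - t) * fstar x)
      = Rsq ν η fstar + (2*t) * I1 + t^2 * I2 := by
    intro t
    have hpt : ∀ x, η x * ((t * f x + (1 - t) * fstar x) - 1)^2
        + (1 - η x) * (t * f x + (1 - t) * fstar x)^2
        = (η x * (fstar x - 1)^2 + (1 - η x) * (fstar x)^2)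
          + ((2*t) * ((fstar x - η x) * (f x - fstar x)) + t^2 * ((f x - fstar x)^2)) := by
      intro x; ring
    have hsint : Integrable (fun x => η x * (fstar x - 1)^2 + (1 - η x) * (fstar x)^2) ν := by
      apply integrable_of_bdd (((hη.mul ((hsm.sub measurable_const).pow measurable_const))).add
        ((measurable_const.sub hη).mul (hsm.pow measurable_const))) 2
      intro x
      simp only [Pi.mul_apply, Pi.sub_apply, Pi.add_apply, Pi.pow_apply]
      rcases hη01 x with ⟨h1, h2⟩; rcases hs01 x with ⟨h5, h6⟩
      rw [abs_of_nonneg (by nlinarith)]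
      nlinarith
    have hB : Integrable (fun x => (2*t) * ((fstar x - η x) * (f x - fstar x))) ν :=
      hI1int.const_mul _
    have hC : Integrable (fun x => t^2 * ((f x - fstar x)^2)) ν := hI2int.const_mul _
    have hBC : Integrable (fun x => (2*t) * ((fstar x - η x) * (f x - fstar x))
        + t^2 * ((f x - fstar x)^2)) ν := hB.add hC
    rw [Rsq]
    simp_rw [hpt]
    rw [integral_add hsint hBC, integral_add hB hC, integral_const_mul, integral_const_mul]
    rw [Rsq, ← hI1def, ← hI2def]; ring
  have hI2nonneg : 0 ≤ I2 := integral_nonneg (fun x => sq_nonneg _)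
  have hkey : ∀ t : ℝ, t ∈ Ioc (0:ℝ) 1 → 0 ≤ 2*t*I1 + t^2*I2 := by
    intro t ht
    have hmem := hFconv f hf fstar hfstar t ⟨ht.1.le, ht.2⟩
    have h := hmin _ hmem
    rw [hRt t] at h; linarith
  have hI1nonneg : 0 ≤ I1 := by
    by_contra hneg
    push_neg at hneg
    set t := min 1 (-I1 / (I2 + 1)) with htdef
    have ht1 : t ≤ 1 := min_le_left _ _
    have hIpos : 0 < -I1 / (I2 + 1) := div_pos (by linarith) (by linarith)
    have ht0 : 0 < t := lt_min one_pos hIpos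
    have htr : t ≤ -I1 / (I2 + 1) := min_le_right _ _
    have h2 : t * (I2 + 1) ≤ -I1 := by
      rw [← le_div_iff₀ (by linarith : (0:ℝ) < I2 + 1)]
      exact htr
    have h3 := hkey t ⟨ht0, ht1⟩
    nlinarith
  have hEeq : E = 2*I1 + I2 := by
    have h1 : Rsq ν η f = Rsq ν η (fun x => (1:ℝ) * f x + (1-1) * fstar x) := by
      simp only [Rsq]; congr 1; funext x; ring
    rw [hE, h1, hRt 1]; ring
  have hI2E : I2 ≤ E := by linarith
  have hE0' : 0 ≤ E := by linarith
  -- integrability of the 0-1 risk integrands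
  have hsetf : MeasurableSet {x | f x > 1/2} := measurableSet_lt measurable_const hfm
  have hseth : MeasurableSet {x | η x > 1/2} := measurableSet_lt measurable_const hη
  have hint1 : Integrable (fun x => if f x > 1/2 then 1 - η x else η x) ν := by
    apply integrable_of_bdd (Measurable.ite hsetf (measurable_const.sub hη) hη) 1
    intro x; rcases hη01 x with ⟨h1, h2⟩
    simp only [Pi.mul_apply, Pi.sub_apply, Pi.add_apply, Pi.pow_apply]
    split <;> (rw [abs_le]; constructor <;> linarith)
  have hint2 : Integrable (fun x => if η x > 1/2 then 1 - η x else η x) ν := by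
    apply integrable_of_bdd (Measurable.ite hseth (measurable_const.sub hη) hη) 1
    intro x; rcases hη01 x with ⟨h1, h2⟩
    simp only [Pi.mul_apply, Pi.sub_apply, Pi.add_apply, Pi.pow_apply]
    split <;> (rw [abs_le]; constructor <;> linarith)
  have hdiff : R01 ν η f - R01 ν η η
      = ∫ x, ((if f x > 1/2 then 1 - η x else η x) - (if η x > 1/2 then 1 - η x else η x)) ∂ν :=
    (integral_sub hint1 hint2).symm
  have main : ∀ γ ∈ Ioc (0:ℝ) (1/2),
      R01 ν η f - R01 ν η η ≤ 2 * (E / γ + c * γ ^ (β + 1)) := by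
    intro γ hγ
    obtain ⟨hγ0, hγhalf⟩ := hγ
    set S : Set X := {x | |η x - 1/2| ≤ γ} with hSdef
    have hSmeas : MeasurableSet S :=
      measurableSet_le (hη.sub measurable_const).abs measurable_const
    set ψ : X → ℝ := fun x => (2/γ) * (f x - fstar x)^2 + S.indicator (fun _ => 2*γ) x with hψdef
    have hA : Integrable (fun x => (2/γ) * (f x - fstar x)^2) ν := hI2int.const_mul _
    have hB : Integrable (fun x => S.indicator (fun _ => 2*γ) x) ν :=
      (integrable_const (2*γ)).indicator hSmeas
    have hψint : Integrable ψ ν := hA.add hB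
    have hmono : ∀ᵐ x ∂ν,
        (if f x > 1/2 then 1 - η x else η x) - (if η x > 1/2 then 1 - η x else η x) ≤ ψ x := by
      filter_upwards [hsamesign, hψlb] with x hx1 hx2
      have hind0 : (0:ℝ) ≤ S.indicator (fun _ => 2*γ) x :=
        Set.indicator_nonneg (fun _ _ => by positivity) x
      have hsq0 : 0 ≤ (2/γ) * (f x - fstar x)^2 := by positivity
      rcases hη01 x with ⟨hη0, hη1⟩
      by_cases hfx : f x > 1/2 <;> by_cases hhx : η x > 1/2
      · simp only [hψdef, if_pos hfx, if_pos hhx]; linarith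
      · -- f > 1/2, η ≤ 1/2, hence fstar ≤ 1/2
        push_neg at hhx
        have hfs : fstar x ≤ 1/2 := by
          by_contra hcon; push_neg at hcon; exact absurd (hx1.1 hcon) (not_lt.2 hhx)
        have habs : 1/2 - η x ≤ 1/2 - fstar x := by
          rw [abs_of_nonpos (by linarith), abs_of_nonpos (by linarith)] at hx2
          linarith
        simp only [hψdef, if_pos hfx, if_neg (not_lt.2 hhx)]
        by_cases hxS : x ∈ S
        · have hle : |η x - 1/2| ≤ γ := hxS
          rw [abs_of_nonpos (by linarith)] at hle
          rw [Set.indicator_of_mem hxS]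
          linarith
        · have hgt : γ < |η x - 1/2| := lt_of_not_ge hxS
          rw [abs_of_nonpos (by linarith)] at hgt
          rw [Set.indicator_of_notMem hxS, add_zero]
          have ha1 : γ < 1/2 - η x := by linarith
          have ha2 : 1/2 - η x ≤ f x - fstar x := by linarith
          rw [div_mul_eq_mul_div, le_div_iff₀ hγ0]
          have hs0 : 0 ≤ f x - fstar x := by linarith
          nlinarith [mul_le_mul ha2 ha2 (by linarith) hs0]
      · -- f ≤ 1/2, η > 1/2, hence fstar > 1/2
        have hfs : 1/2 < fstar x := hx1.2 hhx
        push_neg at hfx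
        have habs : η x - 1/2 ≤ fstar x - 1/2 := by
          rw [abs_of_nonneg (by linarith), abs_of_nonneg (by linarith)] at hx2
          linarith
        simp only [hψdef, if_neg (not_lt.2 hfx), if_pos hhx]
        by_cases hxS : x ∈ S
        · have hle : |η x - 1/2| ≤ γ := hxS
          rw [abs_of_nonneg (by linarith)] at hle
          rw [Set.indicator_of_mem hxS]
          linarith
        · have hgt : γ < |η x - 1/2| := lt_of_not_ge hxS
          rw [abs_of_nonneg (by linarith)] at hgt
          rw [Set.indicator_of_notMem hxS, add_zero]
          have ha1 : γ < η x - 1/2 := by linarith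
          have ha2 : η x - 1/2 ≤ fstar x - f x := by linarith
          rw [div_mul_eq_mul_div, le_div_iff₀ hγ0]
          have hs0 : 0 ≤ fstar x - f x := by linarith
          nlinarith [mul_le_mul ha2 ha2 (by linarith) hs0]
      · simp only [hψdef, if_neg hfx, if_neg hhx]; linarith
    have hψval : ∫ x, ψ x ∂ν = (2/γ) * I2 + (ν S).toReal * (2*γ) := by
      simp only [hψdef]
      rw [integral_add hA hB, integral_const_mul, integral_indicator_const _ hSmeas, ← hI2def]
      simp [smul_eq_mul, Measure.real]
    have hνS : (ν S).toReal ≤ c * γ ^ β := htsy γ ⟨hγ0, hγhalf⟩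
    have hrpow : γ ^ (β + 1) = γ ^ β * γ := by
      rw [Real.rpow_add hγ0, Real.rpow_one]
    calc R01 ν η f - R01 ν η η
        = ∫ x, ((if f x > 1/2 then 1 - η x else η x)
            - (if η x > 1/2 then 1 - η x else η x)) ∂ν := hdiff
      _ ≤ ∫ x, ψ x ∂ν := integral_mono_ae (hint1.sub hint2) hψint hmono
      _ = (2/γ) * I2 + (ν S).toReal * (2*γ) := hψval
      _ ≤ (2/γ) * E + (c * γ ^ β) * (2*γ) := by
          apply add_le_add
          · exact mul_le_mul_of_nonneg_left hI2E (by positivity)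
          · exact mul_le_mul_of_nonneg_right hνS (by positivity)
      _ = 2 * (E / γ + c * γ ^ (β + 1)) := by
          rw [hrpow]; field_simp
  refine ⟨main, ?_⟩
  intro hEpos hEsmall
  have hb2 : (0:ℝ) < β + 2 := by linarith
  set γ := E ^ ((1:ℝ)/(β+2)) with hγdef
  have hγ0 : 0 < γ := Real.rpow_pos_of_pos hEpos _
  have hγle : γ ≤ 1/2 := by
    have h1 : γ ≤ ((2:ℝ) ^ (-(β+2))) ^ ((1:ℝ)/(β+2)) :=
      Real.rpow_le_rpow hEpos.le hEsmall (by positivity)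
    have h2 : ((2:ℝ) ^ (-(β+2))) ^ ((1:ℝ)/(β+2)) = (2:ℝ) ^ (-(1:ℝ)) := by
      rw [← Real.rpow_mul (by norm_num : (0:ℝ) ≤ 2)]
      congr 1
      field_simp
    have h3 : (2:ℝ) ^ (-(1:ℝ)) = 1/2 := by
      rw [Real.rpow_neg_one]; norm_num
    rw [h2, h3] at h1
    exact h1
  have hmain := main γ ⟨hγ0, hγle⟩
  have h1 : γ ^ (β+1) = E ^ ((β+1)/(β+2)) := by
    rw [hγdef, ← Real.rpow_mul hEpos.le]
    congr 1
    field_simp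
  have h2 : E / γ = E ^ ((β+1)/(β+2)) := by
    have hmul : E ^ ((β+1)/(β+2)) * γ = E := by
      rw [hγdef, ← Real.rpow_add hEpos]
      rw [show (β+1)/(β+2) + (1:ℝ)/(β+2) = 1 by field_simp; ring, Real.rpow_one]
    rw [div_eq_iff (ne_of_gt hγ0)]
    exact hmul.symm
  rw [h1, h2] at hmain
  calc R01 ν η f - R01 ν η η
      ≤ 2 * (E ^ ((β+1)/(β+2)) + c * E ^ ((β+1)/(β+2))) := hmain
    _ = 2 * (1 + c) * E ^ ((β + 1) / (β + 2)) := by ring
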